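/- arXiv:math/0607490 — 2 statements merged into one kernel-verified Lean document; each statement's English description precedes it below -/
import Mathlib

section
/- Let G be a group and π ∈ G with π² = 1. For tuples f = (π, f₁, …, f_i) ∈ G^{i+1} and g = (π, g₁, …, g_j) ∈ G^{j+1}, define the composition f ∘₁ g = (π, f₁g₁, …, f₁g_j, f₂, …, f_i), and more generally f ∘ₖ g inserts (fₖg₁, …, fₖg_j) in place of fₖ. Let τ_m denote the long cycle (0 1 … m) acting by (f.τ_m)ₗ = π f₁⁻¹ f_{l+1} (indices mod m+1, with f₀ = π). Then (f ∘₁ g).τ_{i+j-1} = (g.τ_j) ∘_j (f.τ_i). -/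
/-- The operadic composition `f ∘ₖ g` of ℕ-indexed tuples, where `g` has arity `j`:
the entry `fₖ` is replaced by the block `(fₖg₁, …, fₖg_j)`. -/
def ncomp {G : Type*} [Group G] (f g : ℕ → G) (k j : ℕ) : ℕ → G :=
  fun l => if l < k then f l
    else if l < k + j then f k * g (l - k + 1)
    else f (l - j + 1)

/-- The action of the long cycle `τ_m = (0 1 … m)` on a tuple `f` of arity `m`
with `f₀ = π`:  `(f.τ_m)_l = π f₁⁻¹ f_{l+1}` for `l < m` and `(f.τ_m)_m = π f₁⁻¹ π`. -/
def ntau {G : Type*} [Group G] (π : G) (f : ℕ → G) (m : ℕ) : ℕ → G :=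
  fun l => if l < m then π * (f 1)⁻¹ * f (l + 1)
    else if l = m then π * (f 1)⁻¹ * π
    else f l

/-!
Both sides are computed entrywise. Writing `m = i + j - 1`, the entries `l < j` come from the
block `f₁g₁, …, f₁g_j` on the left and from `g.τ_j` on the right, where `f₁` cancels. For `j ≤ l ≤ m`
the right side is `(g.τ_j)_j · (f.τ_i)_{l-j+1} = π g₁⁻¹ π · π f₁⁻¹ x`, and `π² = 1` collapses
it to `π (f₁g₁)⁻¹ x`, which is the left side.
-/

section

variable {G : Type*} [Group G]

lemma ncomp_of_lt {f g : ℕ → G} {k j l : ℕ} (h : l < k) : ncomp f g k j l = f l :=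
  if_pos h

lemma ncomp_of_le_of_lt {f g : ℕ → G} {k j l : ℕ} (h₁ : k ≤ l) (h₂ : l < k + j) :
    ncomp f g k j l = f k * g (l - k + 1) := by
  rw [ncomp, if_neg (Nat.not_lt.mpr h₁), if_pos h₂]

lemma ncomp_of_add_le {f g : ℕ → G} {k j l : ℕ} (h : k + j ≤ l) :
    ncomp f g k j l = f (l - j + 1) := by
  rw [ncomp, if_neg (by omega), if_neg (by omega)]

lemma ntau_of_lt (π : G) {f : ℕ → G} {m l : ℕ} (h : l < m) :
    ntau π f m l = π * (f 1)⁻¹ * f (l + 1) :=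
  if_pos h

lemma ntau_self (π : G) (f : ℕ → G) (m : ℕ) : ntau π f m m = π * (f 1)⁻¹ * π := by
  rw [ntau, if_neg (lt_irrefl m), if_pos rfl]

lemma mul_inv_mul_mul_mul_inv_mul {π : G} (hπ : π * π = 1) (a b x : G) :
    π * a⁻¹ * π * (π * b⁻¹ * x) = π * (b * a)⁻¹ * x := by
  calc π * a⁻¹ * π * (π * b⁻¹ * x) = π * a⁻¹ * (π * π) * b⁻¹ * x := by group
    _ = π * (b * a)⁻¹ * x := by rw [hπ]; group

end

theorem stmt2_general {G : Type*} [Group G] (π : G) (hπ : π * π = 1) (i j : ℕ)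
    (hi : 1 ≤ i) (hj : 1 ≤ j) (f g : ℕ → G) :
    ∀ l ≤ i + j - 1,
      ntau π (ncomp f g 1 j) (i + j - 1) l = ncomp (ntau π g j) (ntau π f i) j i l := by
  intro l hl
  have hfg₁ : ncomp f g 1 j 1 = f 1 * g 1 := ncomp_of_le_of_lt le_rfl (by omega)
  rcases lt_or_ge l j with hlj | hjl
  · rw [ntau_of_lt π (by omega : l < i + j - 1), hfg₁, ncomp_of_lt hlj,
      ncomp_of_le_of_lt (by omega) (by omega), ntau_of_lt π hlj, Nat.add_sub_cancel]
    group
  rw [ncomp_of_le_of_lt hjl (by omega), ntau_self]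
  rcases hl.lt_or_eq with hlm | rfl
  · rw [ntau_of_lt π hlm, hfg₁, ncomp_of_add_le (by omega), ntau_of_lt π (by omega : l - j + 1 < i),
      mul_inv_mul_mul_mul_inv_mul hπ, show l + 1 - j + 1 = l - j + 1 + 1 by omega]
  · rw [ntau_self, hfg₁, show i + j - 1 - j + 1 = i by omega, ntau_self,
      mul_inv_mul_mul_mul_inv_mul hπ]

/-- cyclic operad axiom (ii): for `f ∈ O(i)`, `g ∈ O(j)`,
`(f ∘₁ g).τ_{i+j-1} = (g.τ_j) ∘_j (f.τ_i)` (as tuples of arity `i+j-1`). -/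
theorem stmt2 {G : Type*} [Group G] (π : G) (hπ : π * π = 1) (i j : ℕ)
    (hi : 1 ≤ i) (hj : 1 ≤ j) (f g : ℕ → G) (hf : f 0 = π) (hg : g 0 = π) :
    ∀ l ≤ i + j - 1,
      ntau π (ncomp f g 1 j) (i + j - 1) l = ncomp (ntau π g j) (ntau π f i) j i l :=
  stmt2_general π hπ i j hi hj f g
end

section
/- Let G be a group, π ∈ G with π² = 1, and equip the collection O(j) = {π} × G^j with: (a) the operadic compositions ∘ₖ, (b) the right Σ⁺_j-action (f.σ)_i = π f_{σ(0)}⁻¹ f_{σ(i)} (f₀ := π). Then all three cyclic-operad axioms hold simultaneously: (i) the identity (π,1) ∈ O(1) is fixed by τ₁; (ii) (f ∘₁ g).τ_{i+j−1} = (g.τ_j) ∘_j (f.τ_i) for f ∈ O(i), g ∈ O(j); (iii) (f ∘ₖ g).τ_{i+j−1} = (f.τ_i) ∘_{k−1} g for 2 ≤ k ≤ i. Hence O is a cyclic operad in Set. -/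
section CyclicOperad

variable {G : Type*} [Group G] {π : G} {f g : ℕ → G} {i j k l : ℕ}

lemma ncomp_apply_of_lt (h : l < k) : ncomp f g k j l = f l := if_pos h

lemma ncomp_apply_of_le_of_lt (h₁ : k ≤ l) (h₂ : l < k + j) :
    ncomp f g k j l = f k * g (l - k + 1) := by
  rw [ncomp, if_neg (by omega), if_pos h₂]

lemma ncomp_apply_of_add_le (h : k + j ≤ l) : ncomp f g k j l = f (l - j + 1) := by
  rw [ncomp, if_neg (by omega), if_neg (by omega)]

lemma ntau_apply_of_lt (h : l < i) : ntau π f i l = π * (f 1)⁻¹ * f (l + 1) := if_pos h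

lemma ntau_apply_self : ntau π f i i = π * (f 1)⁻¹ * π := by
  rw [ntau, if_neg (lt_irrefl i), if_pos rfl]

lemma mul_mul_cancel_of_mul_self_eq_one (hπ : π * π = 1) (x : G) : π * (π * x) = x := by
  rw [← mul_assoc, hπ, one_mul]

lemma ntau_one_of_apply_one_eq_one (hπ : π * π = 1) (hf₀ : f 0 = π) (hf₁ : f 1 = 1)
    (hl : l ≤ 1) : ntau π f 1 l = f l := by
  interval_cases l
  · rw [ntau_apply_of_lt zero_lt_one, hf₁, hf₀, inv_one, mul_one, mul_one]
  · rw [ntau_apply_self, hf₁, inv_one, mul_one, hπ]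

lemma ntau_ncomp_one (hπ : π * π = 1) (hi : 1 ≤ i) (hj : 1 ≤ j) (hl : l ≤ i + j - 1) :
    ntau π (ncomp f g 1 j) (i + j - 1) l = ncomp (ntau π g j) (ntau π f i) j i l := by
  -- past the first block, the last entry `π g₁⁻¹ π` of `g.τ_j` multiplies an entry `π f₁⁻¹ ⋯`
  -- of `f.τ_i`, and the two middle `π`s cancel
  have hππ := mul_mul_cancel_of_mul_self_eq_one hπ
  have h₁ : ncomp f g 1 j 1 = f 1 * g 1 := ncomp_apply_of_le_of_lt le_rfl (by omega)
  obtain hl | rfl := hl.lt_or_eq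
  · rw [ntau_apply_of_lt hl, h₁]
    obtain hlj | hjl := lt_or_ge l j
    · rw [ncomp_apply_of_le_of_lt (by omega) (by omega), ncomp_apply_of_lt hlj,
        ntau_apply_of_lt hlj, show l + 1 - 1 + 1 = l + 1 by omega]
      group
    · rw [ncomp_apply_of_add_le (by omega), ncomp_apply_of_le_of_lt hjl (by omega),
        ntau_apply_self, ntau_apply_of_lt (by omega), show l + 1 - j + 1 = l - j + 1 + 1 by omega]
      simp only [mul_inv_rev, mul_assoc, hππ]
  · rw [ntau_apply_self, h₁, ncomp_apply_of_le_of_lt (by omega) (by omega), ntau_apply_self,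
      show i + j - 1 - j + 1 = i by omega, ntau_apply_self]
    simp only [mul_inv_rev, mul_assoc, hππ]

lemma ntau_ncomp_of_two_le (hk : 2 ≤ k) (hki : k ≤ i) (hj : 1 ≤ j) (hl : l ≤ i + j - 1) :
    ntau π (ncomp f g k j) (i + j - 1) l = ncomp (ntau π f i) g (k - 1) j l := by
  have h₁ : ncomp f g k j 1 = f 1 := ncomp_apply_of_lt (by omega)
  obtain hl | rfl := hl.lt_or_eq
  · rw [ntau_apply_of_lt hl, h₁]
    obtain hlk | hkl := lt_or_ge l (k - 1)
    · rw [ncomp_apply_of_lt (by omega), ncomp_apply_of_lt hlk, ntau_apply_of_lt (by omega)]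
    obtain hlkj | hkjl := lt_or_ge l (k - 1 + j)
    · rw [ncomp_apply_of_le_of_lt (by omega) (by omega), ncomp_apply_of_le_of_lt hkl hlkj,
        ntau_apply_of_lt (by omega), show k - 1 + 1 = k by omega,
        show l + 1 - k + 1 = l - (k - 1) + 1 by omega]
      simp only [mul_assoc]
    · rw [ncomp_apply_of_add_le (by omega), ncomp_apply_of_add_le hkjl,
        ntau_apply_of_lt (by omega), show l + 1 - j + 1 = l - j + 1 + 1 by omega]
  · rw [ntau_apply_self, h₁, ncomp_apply_of_add_le (by omega),
      show i + j - 1 - j + 1 = i by omega, ntau_apply_self]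

end CyclicOperad

/-- all three cyclic-operad axioms hold simultaneously for the
collection `O(j) = {π} × G^j` with the compositions `∘ₖ` and the cyclic actions
`τ_m`:
(i) the identity `(π, 1) ∈ O(1)` is fixed by `τ₁`;
(ii) `(f ∘₁ g).τ_{i+j-1} = (g.τ_j) ∘_j (f.τ_i)`;
(iii) `(f ∘ₖ g).τ_{i+j-1} = (f.τ_i) ∘_{k-1} g` for `2 ≤ k ≤ i`. -/
theorem stmt14 {G : Type*} [Group G] (π : G) (hπ : π * π = 1) :
    (∀ e : ℕ → G, e 0 = π → e 1 = 1 → ∀ l ≤ 1, ntau π e 1 l = e l) ∧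
    (∀ i j : ℕ, 1 ≤ i → 1 ≤ j → ∀ f g : ℕ → G, f 0 = π → g 0 = π →
      ∀ l ≤ i + j - 1,
        ntau π (ncomp f g 1 j) (i + j - 1) l = ncomp (ntau π g j) (ntau π f i) j i l) ∧
    (∀ i j k : ℕ, 2 ≤ k → k ≤ i → 1 ≤ j → ∀ f g : ℕ → G, f 0 = π → g 0 = π →
      ∀ l ≤ i + j - 1,
        ntau π (ncomp f g k j) (i + j - 1) l = ncomp (ntau π f i) g (k - 1) j l) :=
  ⟨fun _ he₀ he₁ _ hl => ntau_one_of_apply_one_eq_one hπ he₀ he₁ hl,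
    fun _ _ hi hj _ _ _ _ _ hl => ntau_ncomp_one hπ hi hj hl,
    fun _ _ _ hk hki hj _ _ _ _ _ hl => ntau_ncomp_of_two_le hk hki hj hl⟩
end
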